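/- Let n and d_min satisfy n > ⌊log₂ n⌋ + 1 and d_min ≥ 1, and write L = ⌊log₂ n⌋. Then there exist a residue a modulo n + 1 and a code C* of binary words of length n such that every x ∈ C* satisfies σ(x) ≡ a (mod n+1), the minimum Hamming distance of C* is at least d_min, and (as rational numbers) |C*| ≥ max{ 2^{n−1} / V₂(n, d_min + 1), 2^{n−L−1} / V₂(n − L − 1, d_min − 1) }, where V₂(n, r) = Σ_{i=0}^{r} C(n, i). -/

import Mathlib

/-- The moment of a binary word `x = x_1 … x_n`: `σ(x) = ∑ i, i * x_i` (1-based indexing). -/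
def mom {n : ℕ} (x : Fin n → Bool) : ℕ :=
  ∑ i : Fin n, ((i : ℕ) + 1) * (if x i then 1 else 0)

/-!
Let `M₀` be the set of words whose moment is `0 (mod n+1)`, and take a code `C ⊆ M₀` of minimum
distance `d` that is maximal in `M₀`, so that every word of `M₀` is within `d - 1` of `C`.

Every word is within distance 2 of `M₀`: if the moment must move by `r`, flip a `0` at place `r`
to `1` or a `1` at place `-r` to `0`; failing both, the places carrying a `1` are a set containing
`r` but not `0`, so it is not closed under `+ r`, which yields a swap `1 → 0` at `p`, `0 → 1`
at `p + r`. Hence the balls of radius `d + 1` around `C` cover the whole cube (first bound).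

With check bits at the places `1, 2, 4, …, 2 ^ L`, the binary expansion of the missing residue
shows that every assignment of the other `n - L - 1` coordinates extends to a word of `M₀`.
Projecting `C` to those coordinates thus gives a covering of radius `d - 1` of the smaller cube
(second bound).
-/

open Finset Function

section Hamming

variable {ι : Type*} [Fintype ι]

theorem hammingDist_comp_le_of_injective {κ β : Type*} [Fintype κ] [DecidableEq β] {e : κ → ι}
    (he : Injective e) (x y : ι → β) : hammingDist (x ∘ e) (y ∘ e) ≤ hammingDist x y :=
  card_le_card_of_injOn e (fun k hk => by simpa using hk) he.injOn

theorem exists_maximal_code {β : Type*} [DecidableEq β] (M : Finset (ι → β)) {d : ℕ}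
    (hd : 1 ≤ d) :
    ∃ C ⊆ M, (C : Set (ι → β)).Pairwise (d ≤ hammingDist · ·) ∧
      ∀ y ∈ M, ∃ c ∈ C, hammingDist c y < d := by
  classical
  obtain ⟨C, hC, hmax⟩ := exists_max_image
    (M.powerset.filter fun C : Finset (ι → β) => (C : Set (ι → β)).Pairwise (d ≤ hammingDist · ·))
    card ⟨∅, by simp⟩
  rw [mem_filter, mem_powerset] at hC
  refine ⟨C, hC.1, hC.2, fun y hy => ?_⟩
  by_contra! hfar
  have hyC : y ∉ C := fun h => by simpa using (hfar y h).trans_lt' hd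
  have hins : (↑(insert y C) : Set (ι → β)).Pairwise (d ≤ hammingDist · ·) := by
    rw [coe_insert, Set.pairwise_insert]
    exact ⟨hC.2, fun c hc _ => ⟨(hfar c hc).trans_eq (hammingDist_comm c y), hfar c hc⟩⟩
  have := hmax (insert y C) (mem_filter.2 ⟨mem_powerset.2 (insert_subset hy hC.1), hins⟩)
  rw [card_insert_of_notMem hyC] at this
  omega

variable [DecidableEq ι]

theorem hammingDist_update_le_one {β : ι → Type*} [∀ i, DecidableEq (β i)] (x : ∀ i, β i)
    (i : ι) (b : β i) : hammingDist x (update x i b) ≤ 1 := by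
  refine (card_le_card fun j hj => ?_).trans (card_singleton i).le
  by_contra hji
  simp_all

theorem card_filter_hammingDist_le (x : ι → Bool) (r : ℕ) :
    #{y | hammingDist x y ≤ r} ≤ ∑ i ∈ range (r + 1), (Fintype.card ι).choose i :=
  calc #{y | hammingDist x y ≤ r}
      ≤ #((range (r + 1)).biUnion fun i => powersetCard i (univ : Finset ι)) := by
        refine card_le_card_of_injOn (fun y => ({i | x i ≠ y i} : Finset ι)) (fun y hy => ?_)
          (fun y _ z _ hyz => funext fun i => ?_)
        · exact mem_biUnion.2 ⟨_, mem_range.2 (Nat.lt_succ_of_le (mem_filter.1 (mem_coe.1 hy)).2),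
            mem_powersetCard.2 ⟨subset_univ _, rfl⟩⟩
        · have := congrArg (i ∈ ·) hyz
          simp only [mem_filter, mem_univ, true_and, eq_iff_iff] at this
          revert this
          cases x i <;> cases y i <;> cases z i <;> decide
    _ ≤ ∑ i ∈ range (r + 1), #(powersetCard i (univ : Finset ι)) := card_biUnion_le
    _ = ∑ i ∈ range (r + 1), (Fintype.card ι).choose i := by simp [card_powersetCard]

theorem two_pow_card_le_card_mul_sum_choose {C : Finset (ι → Bool)} {ρ : ℕ}
    (hC : ∀ y, ∃ c ∈ C, hammingDist c y ≤ ρ) :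
    2 ^ Fintype.card ι ≤ #C * ∑ i ∈ range (ρ + 1), (Fintype.card ι).choose i :=
  calc 2 ^ Fintype.card ι = #(univ : Finset (ι → Bool)) := by simp
    _ ≤ #(C.biUnion fun c => {y | hammingDist c y ≤ ρ}) :=
        card_le_card fun y _ => by simpa using hC y
    _ ≤ ∑ c ∈ C, #{y | hammingDist c y ≤ ρ} := card_biUnion_le
    _ ≤ ∑ _c ∈ C, ∑ i ∈ range (ρ + 1), (Fintype.card ι).choose i :=
        sum_le_sum fun c _ => card_filter_hammingDist_le c ρ
    _ = #C * ∑ i ∈ range (ρ + 1), (Fintype.card ι).choose i := by rw [sum_const, smul_eq_mul]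

end Hamming

theorem IsOfFinAddOrder.exists_mem_add_notMem {G : Type*} [AddMonoid G] {r : G}
    (hr : IsOfFinAddOrder r) {S : Set G} (hrS : r ∈ S) (h0 : 0 ∉ S) : ∃ p ∈ S, p + r ∉ S := by
  by_contra! hclosed
  have hmul : ∀ k, (k + 1) • r ∈ S := fun k => by
    induction k with
    | zero => simpa using hrS
    | succ k ih => rw [succ_nsmul]; exact hclosed _ ih
  have := hmul (addOrderOf r - 1)
  rw [Nat.sub_add_cancel hr.addOrderOf_pos, addOrderOf_nsmul_eq_zero] at this
  exact h0 this

theorem exists_subset_image_two_pow_sum_eq {m v : ℕ} (hv : v < 2 ^ m) :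
    ∃ S ⊆ (range m).image (2 ^ ·), ∑ s ∈ S, s = v := by
  refine ⟨v.bitIndices.toFinset.image (2 ^ ·), image_subset_image fun k hk => ?_, ?_⟩
  · have := (Nat.two_pow_le_of_mem_bitIndices (List.mem_toFinset.1 hk)).trans_lt hv
    exact mem_range.2 ((Nat.pow_lt_pow_iff_right one_lt_two).1 this)
  · rw [sum_image (Nat.pow_right_injective le_rfl).injOn, sum_toFinset_bitIndices_two_pow]

section Moment

variable {n : ℕ}

def place (i : Fin n) : ZMod (n + 1) := ((i : ℕ) + 1 : ℕ)

theorem place_ne_zero (i : Fin n) : place i ≠ 0 := by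
  rw [place, Ne, ZMod.natCast_eq_zero_iff]
  exact fun h => absurd (Nat.le_of_dvd i.succ_pos h) (by omega)

theorem place_injective : Injective (place (n := n)) := fun i j h => by
  rw [place, place, ZMod.natCast_eq_natCast_iff', Nat.mod_eq_of_lt (by omega),
    Nat.mod_eq_of_lt (by omega)] at h
  exact Fin.ext (by omega)

theorem exists_place_eq {p : ZMod (n + 1)} (hp : p ≠ 0) : ∃ i : Fin n, place i = p := by
  have hlt := ZMod.val_lt p
  have hpos : p.val ≠ 0 := (ZMod.val_ne_zero p).2 hp
  exact ⟨⟨p.val - 1, by omega⟩, by simp [place, Nat.sub_add_cancel (Nat.pos_of_ne_zero hpos)]⟩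

theorem natCast_mom (x : Fin n → Bool) :
    (mom x : ZMod (n + 1)) = ∑ i, if x i then place i else 0 := by
  simp [mom, place]

theorem natCast_mom_update (x : Fin n → Bool) (i : Fin n) (b : Bool) :
    (mom (update x i b) : ZMod (n + 1)) =
      mom x + (if b then place i else 0) - (if x i then place i else 0) := by
  rw [natCast_mom, natCast_mom, ← add_sum_erase _ _ (mem_univ i), ← add_sum_erase _ _ (mem_univ i),
    sum_congr rfl fun j hj => by rw [update_of_ne (ne_of_mem_erase hj)], update_self]
  ring

theorem exists_hammingDist_le_two_natCast_mom_eq_zero (y : Fin n → Bool) :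
    ∃ y', hammingDist y y' ≤ 2 ∧ (mom y' : ZMod (n + 1)) = 0 := by
  obtain ⟨r, hr_def⟩ : ∃ r : ZMod (n + 1), r = -(mom y) := ⟨_, rfl⟩
  by_cases hr : r = 0
  · exact ⟨y, by simp, by linear_combination hr_def - hr⟩
  obtain ⟨i, hi⟩ := exists_place_eq hr
  obtain ⟨j, hj⟩ := exists_place_eq (neg_ne_zero.2 hr)
  by_cases hyi : y i = false
  · refine ⟨update y i true, (hammingDist_update_le_one y i true).trans (by norm_num), ?_⟩
    rw [natCast_mom_update, hyi, hi]
    simp [hr_def]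
  by_cases hyj : y j = true
  · refine ⟨update y j false, (hammingDist_update_le_one y j false).trans (by norm_num), ?_⟩
    rw [natCast_mom_update, hyj, hj]
    simp [hr_def]
  set S : Set (ZMod (n + 1)) := place '' {k | y k = true}
  have hS : ∀ k, place k ∈ S ↔ y k = true := fun k => place_injective.mem_set_image
  obtain ⟨_, ⟨k, hk, rfl⟩, hkr⟩ := (isOfFinAddOrder_of_finite r).exists_mem_add_notMem
    (by rw [← hi, hS]; simpa using hyi) (by rintro ⟨k, -, hk⟩; exact place_ne_zero k hk)
  -- `place k + r ≠ 0` because `-r ∉ S`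
  obtain ⟨l, hl⟩ := exists_place_eq (p := place k + r) fun h => hyj <| by
    rw [← hS, hj, ← eq_neg_of_add_eq_zero_left h, hS]; exact hk
  have hyl : y l = false := by rw [← Bool.not_eq_true, ← hS, hl]; exact hkr
  have hkl : k ≠ l := fun h => hr (by simpa [h] using hl)
  refine ⟨update (update y k false) l true, ?_, ?_⟩
  · exact (hammingDist_triangle _ (update y k false) _).trans
      (add_le_add (hammingDist_update_le_one _ _ _) (hammingDist_update_le_one _ _ _))
  · rw [natCast_mom_update, natCast_mom_update, update_of_ne hkl.symm, hyl, hk, hl]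
    simp only [if_true, Bool.false_eq_true, if_false, hr_def]
    ring

theorem sum_filter_add_one_mem {M : Type*} [AddCommMonoid M] (f : ℕ → M) {S : Finset ℕ}
    (hS : S ⊆ Icc 1 n) :
    ∑ i ∈ univ.filter fun i : Fin n => (i : ℕ) + 1 ∈ S, f ((i : ℕ) + 1) = ∑ s ∈ S, f s := by
  refine sum_bij (fun i _ => (i : ℕ) + 1) (fun i hi => (mem_filter.1 hi).2)
    (fun i _ j _ h => Fin.ext (by omega)) (fun s hs => ?_) (fun _ _ => rfl)
  have := mem_Icc.1 (hS hs)
  exact ⟨⟨s - 1, by omega⟩, mem_filter.2 ⟨mem_univ _, by simpa [Nat.sub_add_cancel this.1]⟩,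
    Nat.sub_add_cancel this.1⟩

theorem card_subtype_add_one_notMem {T : Finset ℕ} (hT : T ⊆ Icc 1 n) :
    Fintype.card {i : Fin n // (i : ℕ) + 1 ∉ T} = n - #T := by
  rw [Fintype.card_subtype_compl, Fintype.card_fin, Fintype.card_subtype, card_eq_sum_ones,
    card_eq_sum_ones, sum_filter_add_one_mem (fun _ => 1) hT]

theorem exists_natCast_mom_eq_zero_of_forall_exists_sum_eq {T : Finset ℕ}
    (hTn : T ⊆ Icc 1 n) (hT : ∀ t : ZMod (n + 1), ∃ S ⊆ T, ∑ s ∈ S, (s : ZMod (n + 1)) = t)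
    (w : Fin n → Bool) :
    ∃ x : Fin n → Bool,
      (∀ i : Fin n, (i : ℕ) + 1 ∉ T → x i = w i) ∧ (mom x : ZMod (n + 1)) = 0 := by
  obtain ⟨S, hST, hS⟩ :=
    hT (-∑ i ∈ univ.filter fun i : Fin n => (i : ℕ) + 1 ∉ T, if w i then place i else 0)
  refine ⟨fun i => if (i : ℕ) + 1 ∈ T then decide ((i : ℕ) + 1 ∈ S) else w i,
    fun i hi => if_neg hi, ?_⟩
  have hchecks : ∑ i ∈ univ.filter fun i : Fin n => (i : ℕ) + 1 ∈ T,
      (if decide ((i : ℕ) + 1 ∈ S) then place i else 0) = ∑ s ∈ S, (s : ZMod (n + 1)) := by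
    rw [← sum_filter_add_one_mem Nat.cast (hST.trans hTn), sum_filter, sum_filter]
    refine sum_congr rfl fun i _ => ?_
    by_cases hi : (i : ℕ) + 1 ∈ S
    · simp [hi, hST hi, place]
    · simp [hi]
  calc (mom _ : ZMod (n + 1))
      = ∑ s ∈ S, (s : ZMod (n + 1)) +
          ∑ i ∈ univ.filter fun i : Fin n => (i : ℕ) + 1 ∉ T, if w i then place i else 0 := by
        rw [natCast_mom, ← sum_filter_add_sum_filter_not univ (fun i : Fin n => (i : ℕ) + 1 ∈ T),
          ← hchecks]
        congr 1 <;> refine sum_congr rfl fun i hi => ?_ <;> simp [(mem_filter.1 hi).2]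
    _ = 0 := by rw [hS, neg_add_cancel]

theorem two_pow_le_card_mul_of_covers_natCast_mom_eq_zero {ρ : ℕ} {C : Finset (Fin n → Bool)}
    (hC : ∀ y : Fin n → Bool, (mom y : ZMod (n + 1)) = 0 → ∃ c ∈ C, hammingDist c y ≤ ρ) :
    2 ^ n ≤ #C * ∑ i ∈ range (ρ + 3), n.choose i := by
  simpa using two_pow_card_le_card_mul_sum_choose (C := C) (ρ := ρ + 2) fun y => by
    obtain ⟨y', hyy', hy'⟩ := exists_hammingDist_le_two_natCast_mom_eq_zero y
    obtain ⟨c, hc, hcy'⟩ := hC y' hy'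
    exact ⟨c, hc, (hammingDist_triangle c y' y).trans
      (add_le_add hcy' ((hammingDist_comm y' y).trans_le hyy'))⟩

theorem two_pow_sub_card_le_card_mul_of_covers_natCast_mom_eq_zero {ρ : ℕ} {T : Finset ℕ}
    (hTn : T ⊆ Icc 1 n) (hT : ∀ t : ZMod (n + 1), ∃ S ⊆ T, ∑ s ∈ S, (s : ZMod (n + 1)) = t)
    {C : Finset (Fin n → Bool)}
    (hC : ∀ y : Fin n → Bool, (mom y : ZMod (n + 1)) = 0 → ∃ c ∈ C, hammingDist c y ≤ ρ) :
    2 ^ (n - #T) ≤ #C * ∑ i ∈ range (ρ + 1), (n - #T).choose i := by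
  let e : {i : Fin n // (i : ℕ) + 1 ∉ T} → Fin n := Subtype.val
  rw [← card_subtype_add_one_notMem hTn]
  refine (two_pow_card_le_card_mul_sum_choose (C := C.image (· ∘ e)) fun u => ?_).trans
    (Nat.mul_le_mul_right _ card_image_le)
  obtain ⟨x, hxu, hx⟩ := exists_natCast_mom_eq_zero_of_forall_exists_sum_eq hTn hT
    fun i => if h : (i : ℕ) + 1 ∈ T then false else u ⟨i, h⟩
  obtain ⟨c, hc, hcx⟩ := hC x hx
  have hxe : x ∘ e = u := funext fun i => by simp [e, hxu i i.2, i.2]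
  exact ⟨c ∘ e, mem_image_of_mem _ hc,
    hxe ▸ (hammingDist_comp_le_of_injective Subtype.val_injective c x).trans hcx⟩

theorem two_pow_sub_log_le_card_mul_of_covers_natCast_mom_eq_zero {ρ : ℕ} (hn : n ≠ 0)
    {C : Finset (Fin n → Bool)}
    (hC : ∀ y : Fin n → Bool, (mom y : ZMod (n + 1)) = 0 → ∃ c ∈ C, hammingDist c y ≤ ρ) :
    2 ^ (n - Nat.log 2 n - 1) ≤ #C * ∑ i ∈ range (ρ + 1), (n - Nat.log 2 n - 1).choose i := by
  set T : Finset ℕ := (range (Nat.log 2 n + 1)).image (2 ^ ·)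
  have hcard : #T = Nat.log 2 n + 1 := by
    rw [card_image_of_injective _ (Nat.pow_right_injective le_rfl), card_range]
  have hTn : T ⊆ Icc 1 n := fun s hs => by
    obtain ⟨k, hk, rfl⟩ := mem_image.1 hs
    exact mem_Icc.2 ⟨Nat.one_le_two_pow,
      (Nat.pow_le_pow_right two_pos (Nat.lt_succ_iff.1 (mem_range.1 hk))).trans
        (Nat.pow_log_le_self 2 hn)⟩
  have hT (t : ZMod (n + 1)) : ∃ S ⊆ T, ∑ s ∈ S, (s : ZMod (n + 1)) = t := by
    obtain ⟨S, hS, hsum⟩ := exists_subset_image_two_pow_sum_eq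
      ((Nat.lt_succ_iff.1 (ZMod.val_lt t)).trans_lt (Nat.lt_pow_succ_log_self one_lt_two n))
    exact ⟨S, hS, by rw [← Nat.cast_sum, hsum, ZMod.natCast_zmod_val]⟩
  simpa [hcard, Nat.sub_sub] using
    two_pow_sub_card_le_card_mul_of_covers_natCast_mom_eq_zero hTn hT hC

end Moment

/-- Combined lower bound. For `n > ⌊log₂ n⌋ + 1` and `d_min ≥ 1`, writing
`L = ⌊log₂ n⌋`, there are a residue `a` mod `n+1` and a code `C*` of length `n` with all
moments `≡ a (mod n+1)`, minimum Hamming distance at least `d_min`, and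
`|C*| ≥ max{ 2^(n−1)/V₂(n, d_min+1), 2^(n−L−1)/V₂(n−L−1, d_min−1) }` as rationals. -/
theorem stmt11 {n dmin : ℕ} (hd : 1 ≤ dmin) (hn : Nat.log 2 n + 1 < n) :
    ∃ (a : ℕ) (C : Finset (Fin n → Bool)),
      (∀ x ∈ C, mom x % (n + 1) = a) ∧
      (∀ x ∈ C, ∀ y ∈ C, x ≠ y → dmin ≤ hammingDist x y) ∧
      max ((2 ^ (n - 1) : ℚ) / (∑ i ∈ Finset.range (dmin + 2), (n.choose i : ℚ)))
          ((2 ^ (n - Nat.log 2 n - 1) : ℚ) /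
            (∑ i ∈ Finset.range dmin, ((n - Nat.log 2 n - 1).choose i : ℚ)))
        ≤ (C.card : ℚ) := by
  obtain ⟨C, hCM, hCdist, hCcover⟩ :=
    exists_maximal_code (univ.filter fun x : Fin n → Bool => (mom x : ZMod (n + 1)) = 0) hd
  have hcover (y : Fin n → Bool) (hy : (mom y : ZMod (n + 1)) = 0) :
      ∃ c ∈ C, hammingDist c y ≤ dmin - 1 :=
    (hCcover y (mem_filter.2 ⟨mem_univ y, hy⟩)).imp fun _ ⟨hc, hlt⟩ => ⟨hc, by omega⟩
  have hbound₁ := two_pow_le_card_mul_of_covers_natCast_mom_eq_zero hcover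
  have hbound₂ := two_pow_sub_log_le_card_mul_of_covers_natCast_mom_eq_zero (by omega) hcover
  rw [show dmin - 1 + 3 = dmin + 2 by omega] at hbound₁
  rw [Nat.sub_add_cancel hd] at hbound₂
  refine ⟨0, C, fun x hx => ?_, fun x hx y hy => hCdist hx hy, max_le ?_ ?_⟩
  · rw [← ZMod.val_natCast, (mem_filter.1 (hCM hx)).2, ZMod.val_zero]
  · refine div_le_of_le_mul₀ (by positivity) (by positivity) ?_
    calc (2 : ℚ) ^ (n - 1) ≤ 2 ^ n := pow_le_pow_right₀ one_le_two (Nat.sub_le n 1)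
      _ ≤ _ := by exact_mod_cast hbound₁
  · exact div_le_of_le_mul₀ (by positivity) (by positivity) (by exact_mod_cast hbound₂)
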